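/- Let i, j be positive integers with i < j, and let P be the greedy skip-list traversal path from i to j (each hop from m has length 2^l where l is the largest level with 2^l | m and m + 2^l ≤ j). Let A be any valid traversal path starting at some index ≤ i and containing j. Then the first element of P after i that lies on A, call it r, exists and lies in [i, j], and every element of P from r to j lies on A. -/

import Mathlib

/-- A single skip-list hop: `b = a + 2 ^ l` for some level `l` with `2 ^ l ∣ a`. -/
def isHop (a b : ℕ) : Prop := ∃ l : ℕ, 2 ^ l ∣ a ∧ b = a + 2 ^ l

/-- A valid traversal path. -/
def IsPath (P : List ℕ) : Prop := P.Chain' isHop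

/-- The greedy hop level at element `j` towards destination `n`. -/
def hopLevel (j n : ℕ) : ℕ :=
  Nat.findGreatest (fun l => 2 ^ l ∣ j ∧ j + 2 ^ l ≤ n) n

/-- The greedy skip-list traversal from `j` to `n`, computed with explicit fuel. -/
def greedyAux : ℕ → ℕ → ℕ → List ℕ
  | 0, j, _ => [j]
  | fuel + 1, j, n => if j < n then j :: greedyAux fuel (j + 2 ^ hopLevel j n) n else [j]

/-- The greedy skip-list traversal path from `i` to `n`. -/
def greedy (i n : ℕ) : List ℕ := greedyAux (n - i) i n

lemma isHop_lt {a b : ℕ} (h : isHop a b) : a < b := by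
  obtain ⟨l, _, rfl⟩ := h
  have := Nat.two_pow_pos l
  omega

lemma hopLevel_spec {i j : ℕ} (h : i < j) :
    2 ^ hopLevel i j ∣ i ∧ i + 2 ^ hopLevel i j ≤ j := by
  rcases Nat.eq_zero_or_pos (hopLevel i j) with h' | h'
  · rw [h', pow_zero]; exact ⟨one_dvd i, by omega⟩
  · exact Nat.findGreatest_of_ne_zero rfl h'.ne'

lemma hopLevel_max {i j k : ℕ} (h2 : 2 ^ k ∣ i) (h3 : i + 2 ^ k ≤ j) :
    k ≤ hopLevel i j := by
  have hk : k ≤ j := by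
    have := Nat.lt_two_pow_self (n := k)
    omega
  exact Nat.le_findGreatest hk ⟨h2, h3⟩

/-- Arithmetic crossing bound: inside the block `(m, m + 2^l)`, every hop stays `≤ m + 2^l`. -/
lemma hop_bound {m l y k : ℕ} (hm : 2 ^ l ∣ m) (h1 : m < y) (h2 : y < m + 2 ^ l)
    (hk : 2 ^ k ∣ y) : y + 2 ^ k ≤ m + 2 ^ l := by
  have hkl : k < l := by
    by_contra hkl
    push_neg at hkl
    have hly : 2 ^ l ∣ y := dvd_trans (pow_dvd_pow 2 hkl) hk
    have ht : 2 ^ l ∣ y - m := Nat.dvd_sub hly hm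
    have hpos : 0 < y - m := by omega
    have := Nat.le_of_dvd hpos ht
    omega
  have hkm : 2 ^ k ∣ m := dvd_trans (pow_dvd_pow 2 hkl.le) hm
  have ht : 2 ^ k ∣ y - m := Nat.dvd_sub hk hkm
  obtain ⟨u, hu⟩ := ht
  have hupos : 0 < u := by
    rcases Nat.eq_zero_or_pos u with h | h
    · simp [h] at hu; omega
    · exact h
  have hsplit : 2 ^ l = 2 ^ k * 2 ^ (l - k) := by
    rw [← pow_add]; congr 1; omega
  have hult : u < 2 ^ (l - k) := by
    have : 2 ^ k * u < 2 ^ k * 2 ^ (l - k) := by rw [← hsplit]; omega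
    exact lt_of_mul_lt_mul_left this (Nat.zero_le _)
  have : 2 ^ k * (u + 1) ≤ 2 ^ k * 2 ^ (l - k) :=
    Nat.mul_le_mul_left _ (by omega)
  rw [← hsplit] at this
  have hexp : 2 ^ k * (u + 1) = (y - m) + 2 ^ k := by rw [hu]; ring
  omega

/-- Crossing lemma: a path inside the block that reaches past `g` must hit `g`. -/
lemma cross {m g : ℕ} (H : ∀ y k, m < y → y < g → 2 ^ k ∣ y → y + 2 ^ k ≤ g) :
    ∀ (L : List ℕ) (x : ℕ), List.Chain' isHop (x :: L) → m < x → x ≤ g →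
      (∃ b ∈ x :: L, g ≤ b) → g ∈ x :: L := by
  intro L
  induction L with
  | nil =>
    rintro x _ _ hxg ⟨b, hb, hgb⟩
    simp only [List.mem_singleton] at hb ⊢
    omega
  | cons a L' ih =>
    rintro x hc hmx hxg ⟨b, hb, hgb⟩
    by_cases hxg' : x = g
    · simp [hxg']
    have hxlt : x < g := lt_of_le_of_ne hxg hxg'
    obtain ⟨hha, hc'⟩ := List.isChain_cons_cons.mp hc
    obtain ⟨k, hk, rfl⟩ := hha
    have hag : x + 2 ^ k ≤ g := H x k hmx hxlt hk
    have hxa : x < x + 2 ^ k := by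
      have := Nat.two_pow_pos k; omega
    have hb' : b ∈ (x + 2 ^ k) :: L' := by
      rcases List.mem_cons.mp hb with h | h
      · omega
      · exact h
    have := ih (x + 2 ^ k) hc' (lt_trans hmx hxa) hag ⟨b, hb', hgb⟩
    exact List.mem_cons_of_mem _ this

lemma path_pairwise {A : List ℕ} (hA : List.Chain' isHop A) : A.Pairwise (· < ·) :=
  List.isChain_iff_pairwise.mp (hA.imp fun _ _ h => isHop_lt h)

/-- Step lemma: if `m ∈ A`, `j ∈ A`, `m < j`, then the greedy hop target from `m` is in `A`. -/
lemma step_mem {A : List ℕ} (hA : List.Chain' isHop A) {m j : ℕ}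
    (hmA : m ∈ A) (hjA : j ∈ A) (hmj : m < j) : m + 2 ^ hopLevel m j ∈ A := by
  obtain ⟨hdvd, hle⟩ := hopLevel_spec hmj
  set L := hopLevel m j with hL
  set g := m + 2 ^ L with hg
  obtain ⟨s, t, rfl⟩ := List.append_of_mem hmA
  have hsuf : List.Chain' isHop (m :: t) := hA.suffix ⟨s, rfl⟩
  have hpw : (s ++ m :: t).Pairwise (· < ·) := path_pairwise hA
  have hjt : j ∈ t := by
    rcases List.mem_append.mp hjA with h | h
    · exfalso
      have := (List.pairwise_append.mp hpw).2.2 j h m List.mem_cons_self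
      omega
    · rcases List.mem_cons.mp h with h | h
      · omega
      · exact h
  obtain ⟨a, t', rfl⟩ : ∃ a t', t = a :: t' := by
    cases t with
    | nil => simp at hjt
    | cons a t' => exact ⟨a, t', rfl⟩
  obtain ⟨hha, hc'⟩ := List.isChain_cons_cons.mp hsuf
  obtain ⟨k, hk, rfl⟩ := hha
  have hpw' : (m :: (m + 2 ^ k) :: t').Pairwise (· < ·) := path_pairwise hsuf
  have haj : m + 2 ^ k ≤ j := by
    rcases List.mem_cons.mp hjt with h | h
    · omega
    · have := (List.pairwise_cons.mp (List.pairwise_cons.mp hpw').2).1 j h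
      omega
  have hkL : k ≤ L := hopLevel_max hk haj
  have hag : m + 2 ^ k ≤ g := by
    have := Nat.pow_le_pow_right (by norm_num : 1 ≤ 2) hkL
    simp only [hg]; omega
  have hmem : g ∈ (m + 2 ^ k) :: t' := by
    apply cross (m := m) (fun y k' h1 h2 hk' => hop_bound hdvd h1 h2 hk') t' (m + 2 ^ k) hc'
    · have := Nat.two_pow_pos k; omega
    · exact hag
    · exact ⟨j, hjt, hle⟩
  exact List.mem_append.mpr (Or.inr (List.mem_cons_of_mem _ hmem))

lemma greedyAux_fuel {j : ℕ} : ∀ f₁ f₂ i, j - i ≤ f₁ → j - i ≤ f₂ →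
    greedyAux f₁ i j = greedyAux f₂ i j := by
  intro f₁
  induction f₁ with
  | zero =>
    intro f₂ i h1 h2
    have hij : ¬ i < j := by omega
    cases f₂ with
    | zero => rfl
    | succ f₂' => simp [greedyAux, hij]
  | succ f₁' ih =>
    intro f₂ i h1 h2
    by_cases hij : i < j
    · have hf2 : ∃ f₂', f₂ = f₂' + 1 := by cases f₂ <;> [omega; exact ⟨_, rfl⟩]
      obtain ⟨f₂', rfl⟩ := hf2
      simp only [greedyAux, if_pos hij]
      congr 1
      have hpos := Nat.two_pow_pos (hopLevel i j)
      exact ih f₂' (i + 2 ^ hopLevel i j) (by omega) (by omega)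
    · cases f₂ with
      | zero => simp [greedyAux, hij]
      | succ f₂' => simp [greedyAux, hij]

lemma greedy_cons {i j : ℕ} (h : i < j) :
    greedy i j = i :: greedy (i + 2 ^ hopLevel i j) j := by
  have hpos := Nat.two_pow_pos (hopLevel i j)
  unfold greedy
  obtain ⟨f, hf⟩ : ∃ f, j - i = f + 1 := ⟨j - i - 1, by omega⟩
  rw [hf]
  simp only [greedyAux, if_pos h]
  congr 1
  exact greedyAux_fuel f (j - (i + 2 ^ hopLevel i j)) _ (by omega) le_rfl

lemma greedy_self (j : ℕ) : greedy j j = [j] := by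
  unfold greedy
  simp [greedyAux]

lemma greedy_bounds : ∀ n i j x, j - i ≤ n → i ≤ j → x ∈ greedy i j → i ≤ x ∧ x ≤ j := by
  intro n
  induction n with
  | zero =>
    intro i j x h1 h2 hx
    have : i = j := by omega
    subst this
    rw [greedy_self] at hx
    simp at hx; omega
  | succ n ih =>
    intro i j x h1 h2 hx
    by_cases hij : i < j
    · rw [greedy_cons hij] at hx
      obtain ⟨hdvd, hle⟩ := hopLevel_spec hij
      have hpos := Nat.two_pow_pos (hopLevel i j)
      rcases List.mem_cons.mp hx with h | h
      · omega
      · have := ih (i + 2 ^ hopLevel i j) j x (by omega) (by omega) h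
        omega
    · have : i = j := by omega
      subst this
      rw [greedy_self] at hx
      simp at hx; omega

lemma greedy_last_mem : ∀ n i j, j - i ≤ n → i ≤ j → j ∈ greedy i j := by
  intro n
  induction n with
  | zero =>
    intro i j h1 h2
    have : i = j := by omega
    subst this; rw [greedy_self]; simp
  | succ n ih =>
    intro i j h1 h2
    by_cases hij : i < j
    · rw [greedy_cons hij]
      obtain ⟨hdvd, hle⟩ := hopLevel_spec hij
      have hpos := Nat.two_pow_pos (hopLevel i j)
      exact List.mem_cons_of_mem _ (ih (i + 2 ^ hopLevel i j) j (by omega) (by omega))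
    · have : i = j := by omega
      subst this; rw [greedy_self]; simp

lemma greedy_restrict : ∀ n i j r x, j - i ≤ n → i ≤ j → r ∈ greedy i j → x ∈ greedy i j →
    r ≤ x → x ∈ greedy r j := by
  intro n
  induction n with
  | zero =>
    intro i j r x h1 h2 hr hx hrx
    have : i = j := by omega
    subst this
    rw [greedy_self] at hr hx
    simp at hr hx
    subst hr; subst hx
    rw [greedy_self]; simp
  | succ n ih =>
    intro i j r x h1 h2 hr hx hrx
    by_cases hij : i < j
    · rw [greedy_cons hij] at hr hx
      obtain ⟨hdvd, hle⟩ := hopLevel_spec hij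
      have hpos := Nat.two_pow_pos (hopLevel i j)
      rcases List.mem_cons.mp hr with h | h
      · subst h
        rw [greedy_cons hij]
        exact hx
      · have hri : i + 2 ^ hopLevel i j ≤ r :=
          (greedy_bounds n _ j r (by omega) (by omega) h).1
        rcases List.mem_cons.mp hx with h' | h'
        · omega
        · exact ih (i + 2 ^ hopLevel i j) j r x (by omega) (by omega) h h' hrx
    · have : i = j := by omega
      subst this
      rw [greedy_self] at hr hx
      simp at hr hx
      subst hr; subst hx
      rw [greedy_self]; simp
  
lemma greedy_tail_in {A : List ℕ} (hA : IsPath A) {j : ℕ} (hjA : j ∈ A) :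
    ∀ n i, j - i ≤ n → i ≤ j → i ∈ A → ∀ x ∈ greedy i j, x ∈ A := by
  intro n
  induction n with
  | zero =>
    intro i h1 h2 hiA x hx
    have : i = j := by omega
    subst this
    rw [greedy_self] at hx
    simp at hx; subst hx; exact hjA
  | succ n ih =>
    intro i h1 h2 hiA x hx
    by_cases hij : i < j
    · rw [greedy_cons hij] at hx
      obtain ⟨hdvd, hle⟩ := hopLevel_spec hij
      have hpos := Nat.two_pow_pos (hopLevel i j)
      rcases List.mem_cons.mp hx with h | h
      · subst h; exact hiA
      · have hstep : i + 2 ^ hopLevel i j ∈ A := step_mem hA hiA hjA hij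
        exact ih (i + 2 ^ hopLevel i j) (by omega) (by omega) hstep x h
    · have : i = j := by omega
      subst this
      rw [greedy_self] at hx
      simp at hx; subst hx; exact hjA

/-- The greedy membership-proof path from `i` to `j` and any valid traversal path `A`
starting at or before `i` and containing `j` first meet at some element `r ∈ [i, j]`,
and from `r` onward every element of the proof path lies on `A`. -/
theorem stmt15 (i j : ℕ) (hi : 0 < i) (hij : i < j)
    (A : List ℕ) (hA : IsPath A)
    (hAstart : ∃ a, A.head? = some a ∧ a ≤ i) (hjA : j ∈ A) :
    ∃ r : ℕ, r ∈ greedy i j ∧ r ∈ A ∧ i ≤ r ∧ r ≤ j ∧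
      (∀ x ∈ greedy i j, x ∈ A → r ≤ x) ∧
      ∀ x ∈ greedy i j, r ≤ x → x ∈ A := by
  have hjg : j ∈ greedy i j := greedy_last_mem (j - i) i j le_rfl (by omega)
  have hex : ∃ r, r ∈ greedy i j ∧ r ∈ A := ⟨j, hjg, hjA⟩
  obtain ⟨hrg, hrA⟩ := Nat.find_spec hex
  set r := Nat.find hex with hr
  have hbounds := greedy_bounds (j - i) i j r le_rfl (by omega) hrg
  refine ⟨r, hrg, hrA, hbounds.1, hbounds.2, ?_, ?_⟩
  · intro x hx hxA
    exact Nat.find_min' hex ⟨hx, hxA⟩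
  · intro x hx hrx
    have hx' : x ∈ greedy r j :=
      greedy_restrict (j - i) i j r x le_rfl (by omega) hrg hx hrx
    exact greedy_tail_in hA hjA (j - r) r le_rfl hbounds.2 hrA x hx'
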